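/- Let k be an algebraically closed field of characteristic 2 and let e > 1 be an integer. Consider the homogeneous polynomial F = Y^{2e} − X^{2e−1}·Y − X·Z^{2e−1} in k[X,Y,Z]. If (x, y, z) ∈ k³ satisfies F(x,y,z) = 0 and all three partial derivatives ∂F/∂X, ∂F/∂Y, ∂F/∂Z vanish at (x,y,z), then (x,y,z) = (0,0,0). (In other words, the plane projective curve C ⊆ ℙ²_k defined by Y^{2e} − X^{2e−1}Y = XZ^{2e−1} is a smooth curve.) -/

import Mathlib

/-! In characteristic 2 the coefficients `2e` and `2e - 1` become `0` and `1`, so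
`∂F/∂Y = X^{2e-1}` and `∂F/∂X = X^{2e-2} Y + Z^{2e-1}`. A singular point therefore has
`x = 0`, then `z = 0` (this is where `e > 1` enters, making `X^{2e-2}` vanish at `x = 0`),
and finally `F(0, y, 0) = y^{2e}` forces `y = 0`. -/

open MvPolynomial

namespace CurveInCharTwo

variable {R : Type*} [CommRing R] [CharP R 2]

lemma natCast_two_mul_sub_one {e : ℕ} (he : 0 < e) : ((2 * e - 1 : ℕ) : R) = 1 :=
  natCast_eq_one_of_odd_of_two_eq_zero (Nat.Even.sub_odd (by omega) (even_two_mul e) odd_one)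
    CharTwo.two_eq_zero

variable (e : ℕ)

noncomputable abbrev curvePoly : MvPolynomial (Fin 3) R :=
  X 1 ^ (2 * e) - X 0 ^ (2 * e - 1) * X 1 - X 0 * X 2 ^ (2 * e - 1)

lemma pderiv_zero_curvePoly (he : 0 < e) :
    pderiv 0 (curvePoly (R := R) e) = X 1 * X 0 ^ (2 * e - 1 - 1) + X 2 ^ (2 * e - 1) := by
  simp [natCast_two_mul_sub_one he, CharTwo.sub_eq_add]

lemma pderiv_one_curvePoly : pderiv 1 (curvePoly (R := R) e) = X 0 ^ (2 * e - 1) := by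
  simp [CharTwo.two_eq_zero, CharTwo.sub_eq_add]

end CurveInCharTwo

open CurveInCharTwo in
theorem plane_curve_smooth_general
    (k : Type*) [Field k] [CharP k 2] (e : ℕ) (he : 1 < e)
    (F : MvPolynomial (Fin 3) k)
    (hF : F = (X 1 : MvPolynomial (Fin 3) k) ^ (2 * e)
        - (X 0) ^ (2 * e - 1) * X 1 - X 0 * (X 2) ^ (2 * e - 1))
    (x y z : k)
    (h0 : eval ![x, y, z] F = 0)
    (hdX : eval ![x, y, z] (pderiv 0 F) = 0)
    (hdY : eval ![x, y, z] (pderiv 1 F) = 0) :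
    x = 0 ∧ y = 0 ∧ z = 0 := by
  change F = curvePoly e at hF
  subst hF
  rw [pderiv_one_curvePoly] at hdY
  rw [pderiv_zero_curvePoly e (by omega)] at hdX
  have hx : x = 0 := eq_zero_of_pow_eq_zero (by simpa using hdY)
  subst hx
  have hz : z = 0 :=
    eq_zero_of_pow_eq_zero (by simpa [zero_pow (by omega : 2 * e - 1 - 1 ≠ 0)] using hdX)
  subst hz
  have hy : y = 0 :=
    eq_zero_of_pow_eq_zero (by simpa [zero_pow (by omega : 2 * e - 1 ≠ 0)] using h0)
  exact ⟨rfl, hy, rfl⟩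

/-- Let `k` be an algebraically closed field of characteristic `2` and `e > 1`.
For `F = Y^{2e} - X^{2e-1}·Y - X·Z^{2e-1}` in `k[X,Y,Z]` (with `X = X 0`, `Y = X 1`, `Z = X 2`),
any common zero of `F` and its three formal partial derivatives is `(0,0,0)`; i.e. the plane
projective curve `Y^{2e} - X^{2e-1}Y = XZ^{2e-1}` in `ℙ²_k` is smooth. -/
theorem plane_curve_smooth
    (k : Type*) [Field k] [IsAlgClosed k] [CharP k 2] (e : ℕ) (he : 1 < e)
    (F : MvPolynomial (Fin 3) k)
    (hF : F = (X 1 : MvPolynomial (Fin 3) k) ^ (2 * e)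
        - (X 0) ^ (2 * e - 1) * X 1 - X 0 * (X 2) ^ (2 * e - 1))
    (x y z : k)
    (h0 : eval ![x, y, z] F = 0)
    (hdX : eval ![x, y, z] (pderiv 0 F) = 0)
    (hdY : eval ![x, y, z] (pderiv 1 F) = 0)
    (hdZ : eval ![x, y, z] (pderiv 2 F) = 0) :
    x = 0 ∧ y = 0 ∧ z = 0 :=
  plane_curve_smooth_general k e he F hF x y z h0 hdX hdY
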